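/- arXiv:2201.01558 — 3 statements merged into one kernel-verified Lean document; each statement's English description precedes it below -/
import Mathlib

section
/- Let m ≥ 1 be an odd integer and n = 2m+1. Define s ∈ (ℤ_{4m+2})^n by s_{2j+1} = 3m+2+2j and s_{2j+2} = m+2+2j (mod 4m+2) for 0 ≤ j ≤ m−1, and s_{2m+1} = m (which equals 3m+2+2m modulo 4m+2). Then the non-cyclic error ball E(n,2,1,0) splits ℤ_{4m+2} with splitting sequence s. -/
/-- The non-cyclic error ball `E(n,b,k₊,k₋)`: vectors `e ∈ [−k₋,k₊]^n` (indices `0,…,n−1`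
corresponding to coordinates `1,…,n`) such that for some `i`, all entries outside the
window `[i, i+b−1]` vanish. -/
def nonCyclicBall (n b kp km : ℕ) : Set (Fin n → ℤ) :=
  {e | (∀ ℓ, -(km : ℤ) ≤ e ℓ ∧ e ℓ ≤ (kp : ℤ)) ∧
    ∃ i : Fin n, ∀ ℓ : Fin n, (ℓ.val < i.val ∨ i.val + b ≤ ℓ.val) → e ℓ = 0}

/-- The cyclic error ball `E°(n,b,k₊,k₋)`: vectors `e ∈ [−k₋,k₊]^n` such that for some
`i ∈ ℤ_n`, all entries outside the cyclic window `{i, i+1, …, i+b−1}` vanish. -/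
def cyclicBall (n b kp km : ℕ) : Set (Fin n → ℤ) :=
  {e | (∀ ℓ, -(km : ℤ) ≤ e ℓ ∧ e ℓ ≤ (kp : ℤ)) ∧
    ∃ i : ZMod n, ∀ ℓ : Fin n,
      (∀ j : ℕ, j < b → ((ℓ.val : ZMod n) ≠ i + (j : ZMod n))) → e ℓ = 0}
/-- The set `A ⊆ ℤ^n` splits the abelian group `G` with splitting sequence `s`
if the map `a ↦ Σ aᵢ sᵢ` is injective on `A`. -/
def Splits {n : ℕ} {G : Type*} [AddCommGroup G] (A : Set (Fin n → ℤ)) (s : Fin n → G) : Prop :=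
  Set.InjOn (fun a => ∑ i, a i • s i) A

/-!
Every error in `E(n,2,1,0)` is `0`, a unit vector `e_t`, or an adjacent pair `e_t + e_{t+1}`.
For odd `m` the entries `s_t` are pairwise distinct odd residues modulo `4m+2`, while
`s_t + s_{t+1} ≡ 2t+2` runs through distinct nonzero even residues. So the syndrome `a · s`
determines `a`: an odd residue `v` decodes to the `e_t` with `s_t = v`, a nonzero even residue
`2t+2` to `e_t + e_{t+1}`, and `0` to `0`.
-/

theorem eq_zero_or_single_or_pair_of_mem_nonCyclicBall {n : ℕ} {a : Fin n → ℤ}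
    (ha : a ∈ nonCyclicBall n 2 1 0) :
    a = 0 ∨ (∃ t, a = Pi.single t 1) ∨
      ∃ t u : Fin n, u.val = t.val + 1 ∧ a = Pi.single t 1 + Pi.single u 1 := by
  obtain ⟨hbound, i, hwindow⟩ := ha
  have hbit : ∀ ℓ, a ℓ = 0 ∨ a ℓ = 1 := fun ℓ => by have := hbound ℓ; omega
  by_cases hi : i.val + 1 < n
  · set u : Fin n := ⟨i.val + 1, hi⟩
    have hsupp : a = Pi.single i (a i) + Pi.single u (a u) := by
      funext ℓ
      by_cases hℓi : ℓ = i
      · subst hℓi; simp [u, Fin.ext_iff]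
      by_cases hℓu : ℓ = u
      · subst hℓu; simp [u, Fin.ext_iff]
      simp only [Pi.add_apply, Pi.single_apply, hℓi, hℓu, if_false, add_zero]
      exact hwindow ℓ (by simp only [u, Fin.ext_iff] at hℓi hℓu; omega)
    rcases hbit i with hai | hai <;> rcases hbit u with hau | hau <;> rw [hai, hau] at hsupp
    · simp [hsupp]
    · exact Or.inr (Or.inl ⟨u, by simpa using hsupp⟩)
    · exact Or.inr (Or.inl ⟨i, by simpa using hsupp⟩)
    · exact Or.inr (Or.inr ⟨i, u, rfl, hsupp⟩)
  · have hsupp : a = Pi.single i (a i) := by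
      funext ℓ
      by_cases hℓi : ℓ = i
      · subst hℓi; simp
      rw [Pi.single_apply, if_neg hℓi]
      exact hwindow ℓ (by have := Fin.val_ne_of_ne hℓi; omega)
    rcases hbit i with hai | hai <;> rw [hai] at hsupp
    · simp [hsupp]
    · exact Or.inr (Or.inl ⟨i, hsupp⟩)

def splittingSeq (m : ℕ) : Fin (2 * m + 1) → ZMod (4 * m + 2) := fun t =>
  if t.val % 2 = 0 then ((3 * m + 2 + t.val : ℕ) : ZMod (4 * m + 2))
  else ((m + 1 + t.val : ℕ) : ZMod (4 * m + 2))

/-- The representative of `splittingSeq m t` in `[0, 4m+2)`: `3m+2+t` wraps around once `t ≥ m`. -/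
def splittingSeqVal (m t : ℕ) : ℕ :=
  if t % 2 = 0 then (if t < m then 3 * m + 2 + t else t - m) else m + 1 + t

theorem splittingSeq_val {m : ℕ} (t : Fin (2 * m + 1)) :
    (splittingSeq m t).val = splittingSeqVal m t := by
  have ht := t.isLt
  unfold splittingSeq splittingSeqVal
  split_ifs
  · exact ZMod.val_cast_of_lt (by omega)
  · have : 3 * m + 2 + t.val = (t.val - m) + (4 * m + 2) := by omega
    rw [this, Nat.cast_add, ZMod.natCast_self, add_zero]
    exact ZMod.val_cast_of_lt (by omega)
  · exact ZMod.val_cast_of_lt (by omega)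

theorem splittingSeqVal_odd {m : ℕ} (hm : Odd m) (t : ℕ) : splittingSeqVal m t % 2 = 1 := by
  obtain ⟨k, rfl⟩ := hm
  unfold splittingSeqVal
  split_ifs <;> omega

theorem splittingSeqVal_inj {m t t' : ℕ} (ht : t < 2 * m + 1) (ht' : t' < 2 * m + 1) :
    splittingSeqVal m t = splittingSeqVal m t' ↔ t = t' := by
  unfold splittingSeqVal
  split_ifs <;> omega

theorem splittingSeq_add_val {m : ℕ} (t u : Fin (2 * m + 1)) (hu : u.val = t.val + 1) :
    (splittingSeq m t + splittingSeq m u).val = 2 * t.val + 2 := by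
  have hu' := u.isLt
  have hsum : splittingSeq m t + splittingSeq m u =
      ((2 * t.val + 2 + (4 * m + 2) : ℕ) : ZMod (4 * m + 2)) := by
    unfold splittingSeq
    rw [hu]
    split_ifs <;> first | omega | (push_cast; ring)
  rw [hsum, Nat.cast_add, ZMod.natCast_self, add_zero]
  exact ZMod.val_cast_of_lt (by omega)

def splittingDecoder (m v : ℕ) : Fin (2 * m + 1) → ℤ := fun ℓ =>
  if splittingSeqVal m ℓ = v ∨ (0 < v ∧ (v = 2 * ℓ.val + 2 ∨ v = 2 * ℓ.val)) then 1 else 0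

theorem splittingDecoder_val_linearCombination {m : ℕ} (hm : Odd m) {a : Fin (2 * m + 1) → ℤ}
    (ha : a ∈ nonCyclicBall (2 * m + 1) 2 1 0) :
    splittingDecoder m (Fintype.linearCombination ℤ (splittingSeq m) a).val = a := by
  funext ℓ
  have hℓ := splittingSeqVal_odd hm ℓ
  rcases eq_zero_or_single_or_pair_of_mem_nonCyclicBall ha with rfl | ⟨t, rfl⟩ | ⟨t, u, hu, rfl⟩
  · simp only [splittingDecoder, map_zero, ZMod.val_zero, Pi.zero_apply]
    rw [if_neg (by omega)]
  · have ht := splittingSeqVal_odd hm t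
    simp only [splittingDecoder, Fintype.linearCombination_apply_single, one_smul, splittingSeq_val,
      splittingSeqVal_inj ℓ.isLt t.isLt, Pi.single_apply, Fin.ext_iff]
    split_ifs <;> omega
  · simp only [splittingDecoder, map_add, Fintype.linearCombination_apply_single, one_smul,
      splittingSeq_add_val t u hu, Pi.add_apply, Pi.single_apply, Fin.ext_iff]
    split_ifs <;> omega

theorem stmt4_general (m : ℕ) (hmo : Odd m) :
    Splits (nonCyclicBall (2 * m + 1) 2 1 0)
      (fun t : Fin (2 * m + 1) =>
        if t.val % 2 = 0 then ((3 * m + 2 + t.val : ℕ) : ZMod (4 * m + 2))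
        else ((m + 1 + t.val : ℕ) : ZMod (4 * m + 2))) :=
  Set.LeftInvOn.injOn (f₁' := fun x => splittingDecoder m x.val)
    fun _ ha => splittingDecoder_val_linearCombination hmo ha

/-- Case 2 of Theorem: for odd `m ≥ 1` and `n = 2m+1`, the sequence with
`s_{2j+1} = 3m+2+2j`, `s_{2j+2} = m+2+2j` (`0 ≤ j ≤ m−1`) and `s_{2m+1} = m`
(equivalently, `s_t = 3m+2+t` for even `t` and `s_t = m+1+t` for odd `t`, `t` 0-based)
splits `ℤ_{4m+2}` by the non-cyclic error ball `E(n,2,1,0)`. -/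
theorem stmt4 (m : ℕ) (hm : 1 ≤ m) (hmo : Odd m) :
    Splits (nonCyclicBall (2 * m + 1) 2 1 0)
      (fun t : Fin (2 * m + 1) =>
        if t.val % 2 = 0 then ((3 * m + 2 + t.val : ℕ) : ZMod (4 * m + 2))
        else ((m + 1 + t.val : ℕ) : ZMod (4 * m + 2))) :=
  stmt4_general m hmo
end

section
/- Let m ≥ 2 be an even integer and n = 2m. Define s ∈ (ℤ_{4m})^n by s_{2j+1} = m+1+2j and s_{2j+2} = 3m+1+2j (mod 4m) for 0 ≤ j ≤ m−1. Then the non-cyclic error ball E(n,2,1,0) splits ℤ_{4m} with splitting sequence s. -/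
/-
Lift `s` to the integer representatives `m + 1 + t` (`t` even) and `t - m` (`t` odd), with
0-based `t`. They are distinct, lie in a window of length `4m` containing `0`, and are odd when
`m` is even, while two adjacent ones add up to exactly `2t + 2`, an even number in `[2, 4m)`.
So single errors have distinct nonzero syndromes, so do adjacent double errors, and since `4m`
is even the two kinds are told apart by parity.
-/

namespace ZMod

theorem intCast_injOn_Ico (N : ℕ) (lo : ℤ) :
    Set.InjOn (fun a : ℤ => (a : ZMod N)) (Set.Ico lo (lo + N)) := by
  intro a ha b hb hab
  have hdvd := (intCast_eq_intCast_iff_dvd_sub a b N).mp hab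
  have := Int.eq_zero_of_abs_lt_dvd hdvd (abs_sub_lt_iff.mpr ⟨by linarith [ha.1, hb.2],
    by linarith [ha.2, hb.1]⟩)
  linarith

theorem even_iff_of_intCast_eq {N : ℕ} (hN : Even N) {a b : ℤ} (h : (a : ZMod N) = b) :
    Even a ↔ Even b := by
  have hdvd : (2 : ℤ) ∣ b - a :=
    (Int.natCast_dvd_natCast.mpr (even_iff_two_dvd.mp hN)).trans
      ((intCast_eq_intCast_iff_dvd_sub a b N).mp h)
  exact (Int.even_sub.mp (even_iff_two_dvd.mpr hdvd)).symm

end ZMod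

theorem mem_nonCyclicBall_two_one_zero {n : ℕ} {e : Fin n → ℤ}
    (he : e ∈ nonCyclicBall n 2 1 0) :
    e = 0 ∨ (∃ t, e = Pi.single t 1) ∨
      ∃ t u : Fin n, u.val = t.val + 1 ∧ e = Pi.single t 1 + Pi.single u 1 := by
  obtain ⟨hbound, i, hzero⟩ := he
  have hbit : ∀ ℓ, e ℓ = 0 ∨ e ℓ = 1 := fun ℓ => by have := hbound ℓ; push_cast at this; omega
  by_cases hi : i.val + 1 < n
  · set i' : Fin n := ⟨i.val + 1, hi⟩
    have hii' : i ≠ i' := fun h => by simpa [i'] using congrArg Fin.val h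
    have he : e = Pi.single i (e i) + Pi.single i' (e i') := by
      funext ℓ
      by_cases hℓ : ℓ = i
      · subst hℓ; simp [hii']
      by_cases hℓ' : ℓ = i'
      · subst hℓ'; simp [hii'.symm]
      simp only [Pi.add_apply, Pi.single_apply, hℓ, hℓ', if_false, add_zero]
      have h₁ : ℓ.val ≠ i.val := Fin.val_ne_of_ne hℓ
      have h₂ : ℓ.val ≠ i.val + 1 := Fin.val_ne_of_ne hℓ'
      exact hzero ℓ (by omega)
    rcases hbit i with h | h <;> rcases hbit i' with h' | h' <;> rw [h, h'] at he
    · exact Or.inl (by simpa using he)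
    · exact Or.inr (Or.inl ⟨i', by simpa using he⟩)
    · exact Or.inr (Or.inl ⟨i, by simpa using he⟩)
    · exact Or.inr (Or.inr ⟨i, i', rfl, he⟩)
  · have he : e = Pi.single i (e i) := by
      funext ℓ
      by_cases hℓ : ℓ = i
      · subst hℓ; simp
      simp only [Pi.single_apply, hℓ, if_false]
      exact hzero ℓ (by have := Fin.val_ne_of_ne hℓ; omega)
    rcases hbit i with h | h <;> rw [h] at he
    · exact Or.inl (by simpa using he)
    · exact Or.inr (Or.inl ⟨i, he⟩)

theorem sum_single_one_smul {n : ℕ} {G : Type*} [AddCommGroup G] (s : Fin n → G) (t : Fin n) :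
    ∑ i, (Pi.single t (1 : ℤ) : Fin n → ℤ) i • s i = s t := by
  simp [Pi.single_apply, ite_smul]

theorem splits_nonCyclicBall_two_one_zero {n : ℕ} {G : Type*} [AddCommGroup G] {s : Fin n → G}
    (hs : Function.Injective s) (hs0 : ∀ t, s t ≠ 0)
    (hpair : ∀ t u t' u' : Fin n, u.val = t.val + 1 → u'.val = t'.val + 1 →
      s t + s u = s t' + s u' → t = t')
    (hpair0 : ∀ t u : Fin n, u.val = t.val + 1 → s t + s u ≠ 0)
    (hs_pair : ∀ t t' u' : Fin n, u'.val = t'.val + 1 → s t ≠ s t' + s u') :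
    Splits (nonCyclicBall n 2 1 0) s := by
  intro a ha b hb hab
  rcases mem_nonCyclicBall_two_one_zero ha with rfl | ⟨t, rfl⟩ | ⟨t, u, hu, rfl⟩ <;>
    rcases mem_nonCyclicBall_two_one_zero hb with rfl | ⟨t', rfl⟩ | ⟨t', u', hu', rfl⟩ <;>
    simp only [Pi.add_apply, add_smul, Finset.sum_add_distrib, sum_single_one_smul, Pi.zero_apply,
      zero_smul, Finset.sum_const_zero] at hab
  · rfl
  · exact absurd hab.symm (hs0 t')
  · exact absurd hab.symm (hpair0 t' u' hu')
  · exact absurd hab (hs0 t)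
  · rw [hs hab]
  · exact absurd hab (hs_pair t t' u' hu')
  · exact absurd hab (hpair0 t u hu)
  · exact absurd hab.symm (hs_pair t' t u hu)
  · obtain rfl := hpair t u t' u' hu hu' hab
    obtain rfl : u = u' := Fin.ext (by omega)
    rfl

section burst

variable {m : ℕ}

def burstSeq (m : ℕ) (t : Fin (2 * m)) : ZMod (4 * m) :=
  if t.val % 2 = 0 then ((m + 1 + t.val : ℕ) : ZMod (4 * m))
  else ((3 * m + t.val : ℕ) : ZMod (4 * m))

def burstRep (m : ℕ) (t : Fin (2 * m)) : ℤ := if t.val % 2 = 0 then m + 1 + t else t - m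

theorem burstSeq_eq_intCast_burstRep (t : Fin (2 * m)) :
    burstSeq m t = ((burstRep m t : ℤ) : ZMod (4 * m)) := by
  have h4m : ((4 * m : ℕ) : ZMod (4 * m)) = 0 := ZMod.natCast_self _
  push_cast at h4m
  unfold burstSeq burstRep
  split_ifs
  · push_cast; ring
  · push_cast; linear_combination h4m

theorem odd_burstRep (hm : Even m) (t : Fin (2 * m)) : Odd (burstRep m t) := by
  obtain ⟨c, rfl⟩ := hm
  unfold burstRep
  split_ifs
  · exact ⟨c + t / 2, by push_cast; omega⟩
  · exact ⟨t / 2 - c, by push_cast; omega⟩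

theorem burstRep_mem_Ico (t : Fin (2 * m)) :
    burstRep m t ∈ Set.Ico (1 - m : ℤ) (1 - m + (4 * m : ℕ)) := by
  have := t.isLt
  unfold burstRep
  split_ifs <;> constructor <;> push_cast <;> omega

theorem burstRep_injective : Function.Injective (burstRep m) := by
  intro t t' h
  have := t'.isLt
  unfold burstRep at h
  split_ifs at h <;> exact Fin.ext (by omega)

theorem burstRep_add_of_val_eq_succ {t u : Fin (2 * m)} (h : u.val = t.val + 1) :
    burstRep m t + burstRep m u = 2 * t + 2 := by
  unfold burstRep
  split_ifs <;> omega

theorem burstRep_add_mem_Ico {t u : Fin (2 * m)} (h : u.val = t.val + 1) :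
    burstRep m t + burstRep m u ∈ Set.Ico (0 : ℤ) (0 + (4 * m : ℕ)) := by
  have := u.isLt
  rw [burstRep_add_of_val_eq_succ h]
  constructor <;> push_cast <;> omega

theorem burstSeq_add_eq_intCast (t u : Fin (2 * m)) :
    burstSeq m t + burstSeq m u = ((burstRep m t + burstRep m u : ℤ) : ZMod (4 * m)) := by
  rw [burstSeq_eq_intCast_burstRep, burstSeq_eq_intCast_burstRep, Int.cast_add]

theorem burstSeq_injective : Function.Injective (burstSeq m) := by
  intro t t' h
  simp only [burstSeq_eq_intCast_burstRep] at h
  exact burstRep_injective (ZMod.intCast_injOn_Ico _ _ (burstRep_mem_Ico t) (burstRep_mem_Ico t') h)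

theorem burstSeq_ne_zero (hm : Even m) (t : Fin (2 * m)) : burstSeq m t ≠ 0 := by
  intro h
  rw [burstSeq_eq_intCast_burstRep, ← Int.cast_zero] at h
  have h0 : (0 : ℤ) ∈ Set.Ico (1 - m : ℤ) (1 - m + (4 * m : ℕ)) := by
    have := t.isLt
    constructor <;> push_cast <;> omega
  have := ZMod.intCast_injOn_Ico _ _ (burstRep_mem_Ico t) h0 h
  exact Int.not_even_iff_odd.mpr (odd_burstRep hm t) (by rw [this]; exact ⟨0, rfl⟩)

theorem burstSeq_add_injective (t u t' u' : Fin (2 * m)) (hu : u.val = t.val + 1)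
    (hu' : u'.val = t'.val + 1) (h : burstSeq m t + burstSeq m u = burstSeq m t' + burstSeq m u') :
    t = t' := by
  rw [burstSeq_add_eq_intCast, burstSeq_add_eq_intCast] at h
  have := ZMod.intCast_injOn_Ico _ _ (burstRep_add_mem_Ico hu) (burstRep_add_mem_Ico hu') h
  rw [burstRep_add_of_val_eq_succ hu, burstRep_add_of_val_eq_succ hu'] at this
  exact Fin.ext (by omega)

theorem burstSeq_add_ne_zero (t u : Fin (2 * m)) (hu : u.val = t.val + 1) :
    burstSeq m t + burstSeq m u ≠ 0 := by
  intro h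
  rw [burstSeq_add_eq_intCast, ← Int.cast_zero] at h
  have h0 : (0 : ℤ) ∈ Set.Ico (0 : ℤ) (0 + (4 * m : ℕ)) :=
    ⟨le_rfl, by have := u.isLt; push_cast; omega⟩
  have := ZMod.intCast_injOn_Ico _ _ (burstRep_add_mem_Ico hu) h0 h
  rw [burstRep_add_of_val_eq_succ hu] at this
  omega

theorem burstSeq_ne_add (hm : Even m) (t t' u' : Fin (2 * m)) (hu' : u'.val = t'.val + 1) :
    burstSeq m t ≠ burstSeq m t' + burstSeq m u' := by
  intro h
  rw [burstSeq_eq_intCast_burstRep, burstSeq_add_eq_intCast, burstRep_add_of_val_eq_succ hu'] at h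
  exact Int.not_even_iff_odd.mpr (odd_burstRep hm t)
    ((ZMod.even_iff_of_intCast_eq (hm.mul_left 4) h).mpr ⟨t' + 1, by ring⟩)

end burst

theorem stmt5_general (m : ℕ) (hme : Even m) :
    Splits (nonCyclicBall (2 * m) 2 1 0)
      (fun t : Fin (2 * m) =>
        if t.val % 2 = 0 then ((m + 1 + t.val : ℕ) : ZMod (4 * m))
        else ((3 * m + t.val : ℕ) : ZMod (4 * m))) :=
  splits_nonCyclicBall_two_one_zero burstSeq_injective (burstSeq_ne_zero hme)
    burstSeq_add_injective burstSeq_add_ne_zero (burstSeq_ne_add hme)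

/-- Case 3 of Theorem: for even `m ≥ 2` and `n = 2m`, the sequence with
`s_{2j+1} = m+1+2j`, `s_{2j+2} = 3m+1+2j` (`0 ≤ j ≤ m−1`)
(equivalently, `s_t = m+1+t` for even `t` and `s_t = 3m+t` for odd `t`, `t` 0-based)
splits `ℤ_{4m}` by the non-cyclic error ball `E(n,2,1,0)`. -/
theorem stmt5 (m : ℕ) (hm : 2 ≤ m) (hme : Even m) :
    Splits (nonCyclicBall (2 * m) 2 1 0)
      (fun t : Fin (2 * m) =>
        if t.val % 2 = 0 then ((m + 1 + t.val : ℕ) : ZMod (4 * m))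
        else ((3 * m + t.val : ℕ) : ZMod (4 * m))) :=
  stmt5_general m hme
end

section
/- For every integer n ≥ 4 with n ≡ 1 (mod 6) or n ≡ 4 (mod 6), there exists an additive subgroup Λ of ℤ^n that is a lattice tiling of ℤ^n by the cyclic error ball E°(n,2,1,0); equivalently, there exists a perfect lattice code in ℤ^n correcting a single cyclic burst of length 2 of (1,0)-limited-magnitude errors. -/
/-- `Λ` is a lattice tiling of `ℤ^n` by `S`: the translates `v + S`, `v ∈ Λ`,
are pairwise disjoint and cover `ℤ^n`. -/
def IsLatticeTiling {n : ℕ} (Λ : AddSubgroup (Fin n → ℤ)) (S : Set (Fin n → ℤ)) : Prop :=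
  (∀ v ∈ Λ, ∀ w ∈ Λ, v ≠ w → Disjoint ((v + ·) '' S) ((w + ·) '' S)) ∧
  ⋃ v ∈ (Λ : Set (Fin n → ℤ)), (v + ·) '' S = Set.univ

/-!
Write `n = 3t + 1`. The ball `E°(n,2,1,0)` consists of `0`, the unit vectors `e_m` and the
cyclic bursts `e_m + e_{m+1}`: `2n + 1 = 3(2t + 1)` vectors. Give coordinate `m` a weight
`a_m` in `G = ℤ₃ × ℤ_{2t+1}`; if the `2n + 1` syndromes `0`, `a_m`, `a_m + a_{m+1}` are
pairwise distinct, they exhaust `G`, and the kernel of `e ↦ ∑ e_m a_m` is a lattice tiling of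
`ℤ^n` by the ball. With weights in `ℤ × ℤ` whose second coordinate lies in `[-t, t]`, the
distinctness reduces to a finite case analysis on integers (first coordinates taken mod 3).
-/

lemma Int.eq_of_intCast_eq {N : ℕ} {a b : ℤ} (h : (a : ZMod N) = b) (hab : |b - a| < N) :
    a = b :=
  (sub_eq_zero.mp (Int.eq_zero_of_abs_lt_dvd ((ZMod.intCast_eq_intCast_iff_dvd_sub a b N).mp h)
    hab)).symm

lemma ZMod.natCast_val_eq_finEquiv {n : ℕ} [NeZero n] (ℓ : Fin n) :
    ((ℓ.val : ℕ) : ZMod n) = ZMod.finEquiv n ℓ := by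
  obtain ⟨k, rfl⟩ := Nat.exists_eq_succ_of_ne_zero (NeZero.ne n)
  exact Fin.cast_val_eq_self ℓ

lemma Fin.self_ne_add_one {n : ℕ} [NeZero n] (hn : 2 ≤ n) (m : Fin n) : m ≠ m + 1 := by
  intro h
  have h10 : ((1 : Fin n) : ℕ) = 0 := by simpa using congrArg Fin.val (add_eq_left.mp h.symm)
  rw [Fin.val_one', Nat.mod_eq_of_lt hn] at h10
  exact one_ne_zero h10

lemma isLatticeTiling_ker_of_bijective {n : ℕ} {G ι : Type*} [AddGroup G]
    (φ : (Fin n → ℤ) →+ G) (f : ι → Fin n → ℤ) (hf : (φ ∘ f).Bijective) :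
    IsLatticeTiling φ.ker (Set.range f) := by
  refine ⟨?_, ?_⟩
  · intro v hv w hw hvw
    rw [Set.disjoint_left]
    rintro x ⟨_, ⟨c, rfl⟩, rfl⟩ ⟨_, ⟨c', rfl⟩, hx⟩
    have hcc : c' = c := hf.1 <| by
      simpa [(φ.mem_ker).mp hv, (φ.mem_ker).mp hw] using congrArg φ hx
    subst hcc
    exact hvw (add_right_cancel hx).symm
  · refine Set.eq_univ_of_forall fun x => ?_
    obtain ⟨c, hc⟩ := hf.2 (φ x)
    simp only [Set.mem_iUnion, Set.mem_image, Set.mem_range, exists_exists_eq_and]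
    exact ⟨x - f c, by simpa [sub_eq_zero] using hc.symm, c, sub_add_cancel x (f c)⟩

section Burst

variable {n : ℕ} [NeZero n]

lemma mem_cyclicBall_two_one_zero {e : Fin n → ℤ} :
    e ∈ cyclicBall n 2 1 0 ↔
      (∀ ℓ, 0 ≤ e ℓ ∧ e ℓ ≤ 1) ∧ ∃ m : Fin n, ∀ ℓ, ℓ ≠ m → ℓ ≠ m + 1 → e ℓ = 0 := by
  have window (ℓ m : Fin n) : (∀ j : ℕ, j < 2 → ((ℓ.val : ℕ) : ZMod n) ≠ ZMod.finEquiv n m + j) ↔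
      ℓ ≠ m ∧ ℓ ≠ m + 1 := by
    rw [Nat.forall_lt_succ_right, Nat.forall_lt_succ_right]
    simp only [Nat.not_lt_zero, IsEmpty.forall_iff, implies_true, true_and, Nat.cast_zero,
      add_zero, Nat.cast_one, ZMod.natCast_val_eq_finEquiv, ← map_one (ZMod.finEquiv n),
      ← map_add, (ZMod.finEquiv n).injective.ne_iff]
  simp only [cyclicBall, Set.mem_ofPred_eq, Nat.cast_zero, neg_zero, Nat.cast_one,
    (ZMod.finEquiv n).surjective.exists, window, and_imp]

def burst : Option (Fin n × Bool) → Fin n → ℤ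
  | none => 0
  | some (m, false) => Pi.single m 1
  | some (m, true) => Pi.single m 1 + Pi.single (m + 1) 1

lemma cyclicBall_two_one_zero_eq_range (hn : 2 ≤ n) :
    cyclicBall n 2 1 0 = Set.range (burst (n := n)) := by
  have hsucc (m : Fin n) : m ≠ m + 1 := Fin.self_ne_add_one hn m
  ext e
  rw [mem_cyclicBall_two_one_zero]
  constructor
  · rintro ⟨hbound, m, hsupp⟩
    have he : e = Pi.single m (e m) + Pi.single (m + 1) (e (m + 1)) := by
      ext ℓ
      by_cases h0 : ℓ = m
      · subst h0; simp [hsucc]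
      by_cases h1 : ℓ = m + 1
      · subst h1; simp [h0]
      simp [h0, h1, hsupp ℓ h0 h1]
    rcases (by grind : e m = 0 ∨ e m = 1) with h0 | h0 <;>
      rcases (by grind : e (m + 1) = 0 ∨ e (m + 1) = 1) with h1 | h1 <;> rw [h0, h1] at he
    · exact ⟨none, by simp [burst, he]⟩
    · exact ⟨some (m + 1, false), by simp [burst, he]⟩
    · exact ⟨some (m, false), by simp [burst, he]⟩
    · exact ⟨some (m, true), he.symm⟩
  · rintro ⟨c, rfl⟩
    rcases c with _ | ⟨m, _ | _⟩
    · simp [burst]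
    · refine ⟨fun ℓ => ?_, m, fun ℓ h0 _ => by simp [burst, h0]⟩
      by_cases h0 : ℓ = m <;> simp [burst, h0]
    · refine ⟨fun ℓ => ?_, m, fun ℓ h0 h1 => by simp [burst, h0, h1]⟩
      by_cases h0 : ℓ = m
      · subst h0; simp [burst, hsucc]
      by_cases h1 : ℓ = m + 1
      · subst h1; simp [burst, (hsucc m).symm]
      simp [burst, h0, h1]

end Burst

namespace BurstCode

variable (t : ℕ)

def weight (m : ℕ) : ℤ × ℤ :=
  if m % 3 = 0 then (1, (m / 3 : ℕ))
  else if m % 3 = 1 then (1, (m / 3 : ℕ) - t)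
  else (-1, t - 1 - 2 * (m / 3 : ℕ))

def pairWeight (m : ℕ) : ℤ × ℤ :=
  if m = 3 * t then (2, t)
  else if m % 3 = 0 then (2, 2 * (m / 3 : ℕ) - t)
  else if m % 3 = 1 then (0, -1 - (m / 3 : ℕ))
  else (0, t - (m / 3 : ℕ))

lemma weight_add_weight_succ (m : Fin (3 * t + 1)) :
    weight t m + weight t (m + 1 : Fin (3 * t + 1)) = pairWeight t m := by
  have hm := m.isLt
  simp only [Fin.val_add_one, Fin.ext_iff, Fin.val_last, weight, pairWeight]
  split_ifs <;> simp only [Prod.mk_add_mk, Prod.mk.injEq] <;> omega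

def burstWeight : Option (Fin (3 * t + 1) × Bool) → ℤ × ℤ
  | none => 0
  | some (m, false) => weight t m
  | some (m, true) => pairWeight t m

lemma linearCombination_burst (c : Option (Fin (3 * t + 1) × Bool)) :
    Fintype.linearCombination ℤ (fun m : Fin (3 * t + 1) => weight t m) (burst c) =
      burstWeight t c := by
  rcases c with _ | ⟨m, _ | _⟩
  · simp [burst, burstWeight]
  · simp [burst, burstWeight]
  · simp [burst, burstWeight, weight_add_weight_succ]

lemma abs_burstWeight_snd_le (c : Option (Fin (3 * t + 1) × Bool)) :
    |(burstWeight t c).2| ≤ t := by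
  rw [abs_le]
  rcases c with _ | ⟨⟨m, hm⟩, _ | _⟩
  · simp [burstWeight]
  all_goals simp only [burstWeight, weight, pairWeight]; split_ifs <;> omega

lemma burstWeight_eq_of_emod (c c' : Option (Fin (3 * t + 1) × Bool))
    (h1 : (burstWeight t c).1 % 3 = (burstWeight t c').1 % 3)
    (h2 : (burstWeight t c).2 = (burstWeight t c').2) : c = c' := by
  rcases c with _ | ⟨⟨m, hm⟩, _ | _⟩ <;> rcases c' with _ | ⟨⟨m', hm'⟩, _ | _⟩
  all_goals
    simp only [burstWeight, weight, pairWeight, Prod.fst_zero, Prod.snd_zero] at h1 h2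
    simp only [Option.some.injEq, Prod.mk.injEq, Fin.mk.injEq, reduceCtorEq, and_true]
  all_goals split_ifs at h1 h2 <;> omega

def syndrome : (Fin (3 * t + 1) → ℤ) →+ ZMod 3 × ZMod (2 * t + 1) :=
  ((Int.castAddHom (ZMod 3)).prodMap (Int.castAddHom (ZMod (2 * t + 1)))).comp
    (Fintype.linearCombination ℤ fun m : Fin (3 * t + 1) => weight t m).toAddMonoidHom

lemma syndrome_burst_bijective : (syndrome t ∘ burst).Bijective := by
  refine Function.Injective.bijective_of_nat_card_le (fun c c' h => ?_) ?_
  · simp only [Function.comp_apply, syndrome, AddMonoidHom.coe_comp, LinearMap.toAddMonoidHom_coe,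
      linearCombination_burst, AddMonoidHom.coe_prodMap, Int.coe_castAddHom, Prod.ext_iff] at h
    apply burstWeight_eq_of_emod t c c' ((ZMod.intCast_eq_intCast_iff' _ _ 3).mp h.1)
    refine Int.eq_of_intCast_eq h.2 ?_
    have hc := abs_le.mp (abs_burstWeight_snd_le t c)
    have hc' := abs_le.mp (abs_burstWeight_snd_le t c')
    rw [abs_lt]
    push_cast
    omega
  · simp only [Nat.card_eq_fintype_card, Fintype.card_prod, ZMod.card, Fintype.card_option,
      Fintype.card_fin, Fintype.card_bool]
    omega

end BurstCode

open BurstCode in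
/-- For every `n ≥ 4` with `n ≡ 1` or `4 (mod 6)`, there is a lattice tiling of `ℤ^n` by
the cyclic error ball `E°(n,2,1,0)`, i.e., a perfect lattice code correcting a single
cyclic `2`-burst of `(1,0)`-limited-magnitude errors. -/
theorem stmt7 (n : ℕ) (hn : 4 ≤ n) (hmod : n % 6 = 1 ∨ n % 6 = 4) :
    ∃ Λ : AddSubgroup (Fin n → ℤ), IsLatticeTiling Λ (cyclicBall n 2 1 0) := by
  obtain ⟨t, rfl⟩ : ∃ t, n = 3 * t + 1 := ⟨n / 3, by omega⟩
  rw [cyclicBall_two_one_zero_eq_range (by omega)]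
  exact ⟨(syndrome t).ker, isLatticeTiling_ker_of_bijective _ _ (syndrome_burst_bijective t)⟩
end
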